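/- Let i be a positive integer, let (X_l)_{l≥1} be a sequence of i.i.d. real-valued random variables with E[|X₁|^i] < ∞, and let N be a ℕ-valued random variable with E[N^i] < ∞, independent of the sequence (X_l). Then the randomly stopped sum S_N = X₁ + ⋯ + X_N satisfies E[S_N^i] = ∑_{π∈Π_i} g_{(|π|)} ∏_{B∈π} m_{|B|}, where g_{(k)} = E[N(N−1)⋯(N−k+1)] denotes the k-th factorial moment of N and m_r = E[X₁^r]. -/

import Mathlib

/-!
Expanding `(X₀ + ⋯ + X_{n-1})^i` gives a sum over maps `p : Fin i → {0, …, n-1}` of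
`∏ j, X_{p j}`. Grouping equal indices and using independence and identical distribution, the
expectation of such a term is `∏_B m_{|B|}`, the product running over the blocks `B` of the
partition of `Fin i` into the level sets of `p`. The maps with a given level-set partition `π`
are the injective labellings of its blocks, so there are `n (n-1) ⋯ (n-|π|+1)` of them, and
`E[S_n^i] = ∑_π n^{(|π|)} ∏_B m_{|B|}`. Because `N` is independent of the sequence,
`E[S_N^i] = E[φ(N)]` with `φ(n) = E[S_n^i]`, which turns `n^{(k)}` into the factorial moment
`g_{(k)}`. Integrability of `S_N^i` comes from Jensen's bound `E|S_n|^i ≤ n^i E|X₀|^i` and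
`E[N^i] < ∞`.
-/

open Finset MeasureTheory ProbabilityTheory

namespace Finpartition

variable {α : Type*} [DecidableEq α]

lemma parts_eq_image_part {s : Finset α} (P : Finpartition s) : P.parts = s.image P.part := by
  ext t
  refine ⟨fun ht => ?_, fun ht => ?_⟩
  · obtain ⟨a, ha, rfl⟩ := P.part_surjOn ht
    exact mem_image_of_mem _ ha
  · obtain ⟨a, ha, rfl⟩ := mem_image.mp ht
    exact P.part_mem.mpr ha

lemma ext_part {s : Finset α} {P Q : Finpartition s} (h : ∀ a ∈ s, P.part a = Q.part a) :
    P = Q := by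
  ext t
  rw [parts_eq_image_part, parts_eq_image_part, image_congr h]

variable [Fintype α] {β : Type*} [DecidableEq β]

instance (p : α → β) : DecidableRel (Setoid.ker p).r := fun a b => decEq (p a) (p b)

def kerPartition (p : α → β) : Finpartition (univ : Finset α) := ofSetoid (Setoid.ker p)

lemma mem_part_kerPartition {p : α → β} {a b : α} :
    b ∈ (kerPartition p).part a ↔ p a = p b :=
  mem_part_ofSetoid_iff_rel

lemma part_kerPartition (p : α → β) (a : α) :
    (kerPartition p).part a = ({b | p b = p a} : Finset α) := by
  ext b
  simp [mem_part_kerPartition, eq_comm]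

lemma prod_kerPartition_parts {M : Type*} [CommMonoid M] (p : α → β) (f : Finset α → M) :
    ∏ B ∈ (kerPartition p).parts, f B = ∏ c ∈ univ.image p, f {a | p a = c} := by
  have hinj : Set.InjOn (fun c => ({a | p a = c} : Finset α)) (univ.image p) := by
    intro c hc d _ hcd
    obtain ⟨a, -, rfl⟩ := mem_image.mp hc
    simpa using (Finset.ext_iff.mp hcd a).mp (by simp)
  have hparts :
      (kerPartition p).parts = (univ.image p).image fun c => ({a | p a = c} : Finset α) := by
    rw [parts_eq_image_part, image_image]
    exact image_congr fun a _ => part_kerPartition p a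
  rw [hparts, prod_image hinj]

lemma kerPartition_eq_iff {p : α → β} {π : Finpartition (univ : Finset α)} :
    kerPartition p = π ↔ ∀ a b, p a = p b ↔ π.part a = π.part b := by
  refine ⟨fun h a b => ?_, fun h => ext_part fun a _ => ?_⟩
  · rw [← h, ← mem_part_kerPartition, mem_part_iff_part_eq_part _ (mem_univ _) (mem_univ _)]
    exact eq_comm
  · ext b
    rw [mem_part_kerPartition, h, mem_part_iff_part_eq_part _ (mem_univ _) (mem_univ _), eq_comm]

noncomputable def kerPartitionEquiv (π : Finpartition (univ : Finset α)) :
    {p : α → β // kerPartition p = π} ≃ (π.parts ↪ β) :=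
  have part_rep (B : π.parts) : π.part (π.nonempty_of_mem_parts B.2).choose = B :=
    π.part_eq_of_mem B.2 (π.nonempty_of_mem_parts B.2).choose_spec
  { toFun p := ⟨fun B => p.1 (π.nonempty_of_mem_parts B.2).choose, fun B B' h => by
      rw [kerPartition_eq_iff.mp p.2, part_rep, part_rep] at h
      exact Subtype.ext h⟩
    invFun g := ⟨fun a => g ⟨π.part a, π.part_mem.mpr (mem_univ a)⟩, kerPartition_eq_iff.mpr
      fun a b => by simp only [g.injective.eq_iff, Subtype.mk.injEq]⟩
    left_inv p := Subtype.ext <| funext fun a => (kerPartition_eq_iff.mp p.2 _ _).mpr (part_rep _)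
    right_inv g := by
      ext B
      simp only [Function.Embedding.coeFn_mk, part_rep] }

lemma card_filter_kerPartition_eq [Fintype β] (π : Finpartition (univ : Finset α)) :
    #{p : α → β | kerPartition p = π} = (Fintype.card β).descFactorial #π.parts := by
  rw [← Fintype.card_subtype, Fintype.card_congr (kerPartitionEquiv π),
    Fintype.card_embedding_eq, Fintype.card_coe]

lemma sum_comp_kerPartition [Fintype β] {M : Type*} [AddCommMonoid M]
    (f : Finpartition (univ : Finset α) → M) :
    ∑ p : α → β, f (kerPartition p) =
      ∑ π, (Fintype.card β).descFactorial #π.parts • f π := by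
  rw [← sum_fiberwise univ kerPartition]
  refine sum_congr rfl fun π _ => ?_
  rw [sum_congr rfl fun p hp => congrArg f (mem_filter.mp hp).2, sum_const,
    card_filter_kerPartition_eq]

end Finpartition

open Finpartition

section Integrability

variable {Ω ι : Type*} [MeasurableSpace Ω] {μ : Measure Ω}

lemma memLp_of_integrable_abs_pow {f : Ω → ℝ} {i : ℕ} (hf : AEStronglyMeasurable f μ)
    (h : Integrable (fun ω => |f ω| ^ i) μ) : MemLp f i μ := by
  rcases eq_or_ne i 0 with rfl | hi
  · simpa using hf
  · rw [← integrable_norm_rpow_iff hf (by exact_mod_cast hi) (ENNReal.natCast_ne_top i)]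
    simpa [Real.norm_eq_abs] using h

variable [IsFiniteMeasure μ]

lemma integrable_pow_of_memLp {f : Ω → ℝ} {i : ℕ} (hf : MemLp f i μ) :
    Integrable (fun ω => f ω ^ i) μ := by
  refine (integrable_norm_iff (hf.aestronglyMeasurable.pow i)).mp ?_
  simpa only [Pi.pow_apply, norm_pow] using hf.integrable_norm_pow'

lemma integrable_prod_of_memLp_card [Fintype ι] {f : ι → Ω → ℝ}
    (hf : ∀ j, MemLp (f j) (Fintype.card ι) μ) : Integrable (fun ω => ∏ j, f j ω) μ := by
  refine (MemLp.prod' fun j _ => hf j).integrable ?_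
  rw [sum_const, card_univ, nsmul_eq_mul]
  exact ENNReal.one_le_inv.mpr (ENNReal.mul_inv_le_one _)

lemma integrable_descFactorial {N : Ω → ℕ} (hN : Measurable N) {i k : ℕ} (hk : k ≤ i)
    (hint : Integrable (fun ω => (N ω : ℝ) ^ i) μ) :
    Integrable (fun ω => ((N ω).descFactorial k : ℝ)) μ := by
  have hpow : Integrable (fun ω => ‖(N ω : ℝ)‖ ^ k) μ :=
    integrable_norm_pow_of_le (f := fun ω => (N ω : ℝ))
      ((measurable_of_countable _).comp hN).aestronglyMeasurable hk
      (by simpa only [Real.norm_natCast] using hint)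
  refine hpow.mono'
    ((measurable_of_countable fun n : ℕ => (n.descFactorial k : ℝ)).comp hN).aestronglyMeasurable
    (ae_of_all _ fun ω => ?_)
  simpa only [Real.norm_natCast, ← Nat.cast_pow, Nat.cast_le] using
    Nat.descFactorial_le_pow (N ω) k

end Integrability

section Moments

variable {Ω ι : Type*} [MeasurableSpace Ω] {μ : Measure Ω}

lemma ProbabilityTheory.iIndepFun.integral_finset_prod_eq_prod_integral {𝕜 : Type*} [RCLike 𝕜]
    {X : ι → Ω → 𝕜} (hX : iIndepFun X μ) (hm : ∀ c, AEStronglyMeasurable (X c) μ)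
    (s : Finset ι) : ∫ ω, ∏ c ∈ s, X c ω ∂μ = ∏ c ∈ s, ∫ ω, X c ω ∂μ := by
  have h := (hX.precomp (g := ((↑) : s → ι))
    Subtype.val_injective).integral_fun_prod_eq_prod_integral fun c => hm c
  rw [← prod_coe_sort s fun c => ∫ ω, X c ω ∂μ, ← h]
  exact integral_congr_ae (ae_of_all _ fun ω => (prod_coe_sort s (X · ω)).symm)

variable {X : ι → Ω → ℝ} {Z : Ω → ℝ}

lemma integral_abs_sum_pow_le [IsProbabilityMeasure μ] {i : ℕ}
    (hident : ∀ l, IdentDistrib (X l) Z μ μ) (hZ : Integrable (fun ω => |Z ω| ^ i) μ)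
    (s : Finset ι) :
    ∫ ω, |∑ l ∈ s, X l ω| ^ i ∂μ ≤ (#s : ℝ) ^ i * ∫ ω, |Z ω| ^ i ∂μ := by
  have habs_pow (l : ι) := (hident l).comp (continuous_abs.measurable.pow_const i)
  have hint (l : ι) : Integrable (fun ω => |X l ω| ^ i) μ := (habs_pow l).integrable_iff.mpr hZ
  have hmoment (l : ι) : ∫ ω, |X l ω| ^ i ∂μ = ∫ ω, |Z ω| ^ i ∂μ := (habs_pow l).integral_eq
  cases i with
  | zero => simp
  | succ k =>
    calc ∫ ω, |∑ l ∈ s, X l ω| ^ (k + 1) ∂μ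
        ≤ ∫ ω, (#s : ℝ) ^ k * ∑ l ∈ s, |X l ω| ^ (k + 1) ∂μ := by
          refine integral_mono_of_nonneg (ae_of_all _ fun ω => by positivity)
            ((integrable_finsetSum s fun l _ => hint l).const_mul _) (ae_of_all _ fun ω => ?_)
          calc |∑ l ∈ s, X l ω| ^ (k + 1) ≤ (∑ l ∈ s, |X l ω|) ^ (k + 1) :=
                pow_le_pow_left₀ (abs_nonneg _) (abs_sum_le_sum_abs _ _) _
            _ ≤ (#s : ℝ) ^ k * ∑ l ∈ s, |X l ω| ^ (k + 1) :=
                pow_sum_le_card_mul_sum_pow (fun l _ => abs_nonneg _) k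
      _ = (#s : ℝ) ^ (k + 1) * ∫ ω, |Z ω| ^ (k + 1) ∂μ := by
          rw [integral_const_mul, integral_finsetSum _ fun l _ => hint l,
            sum_congr rfl fun l _ => hmoment l, sum_const, nsmul_eq_mul, pow_succ, mul_assoc]

variable [DecidableEq ι]

lemma integral_prod_comp_eq_prod_kerPartition {α : Type*} [Fintype α] [DecidableEq α]
    (hX : iIndepFun X μ) (hident : ∀ l, IdentDistrib (X l) Z μ μ) (p : α → ι) :
    ∫ ω, ∏ a, X (p a) ω ∂μ = ∏ B ∈ (kerPartition p).parts, ∫ ω, Z ω ^ #B ∂μ := by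
  have hpow : iIndepFun (fun c ω => X c ω ^ #{a | p a = c}) μ :=
    hX.comp (fun c x => x ^ #{a | p a = c}) fun c => measurable_id.pow_const _
  calc ∫ ω, ∏ a, X (p a) ω ∂μ
      = ∫ ω, ∏ c ∈ univ.image p, X c ω ^ #{a | p a = c} ∂μ :=
        integral_congr_ae (ae_of_all _ fun ω => prod_comp (fun c => X c ω) p)
    _ = ∏ c ∈ univ.image p, ∫ ω, X c ω ^ #{a | p a = c} ∂μ :=
        hpow.integral_finset_prod_eq_prod_integral
          (fun c => ((hident c).aemeasurable_fst.pow_const _).aestronglyMeasurable) _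
    _ = ∏ c ∈ univ.image p, ∫ ω, Z ω ^ #{a | p a = c} ∂μ :=
        prod_congr rfl fun c _ => ((hident c).comp (measurable_id.pow_const _)).integral_eq
    _ = ∏ B ∈ (kerPartition p).parts, ∫ ω, Z ω ^ #B ∂μ :=
        (prod_kerPartition_parts p fun B => ∫ ω, Z ω ^ #B ∂μ).symm

lemma integral_sum_pow_eq_sum_finpartition [Fintype ι] {i : ℕ} (hX : iIndepFun X μ)
    (hident : ∀ l, IdentDistrib (X l) Z μ μ) (hZ : MemLp Z i μ) :
    ∫ ω, (∑ l, X l ω) ^ i ∂μ = ∑ π : Finpartition (univ : Finset (Fin i)),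
      ((Fintype.card ι).descFactorial #π.parts : ℝ) * ∏ B ∈ π.parts, ∫ ω, Z ω ^ #B ∂μ := by
  have := hX.isProbabilityMeasure
  have hint (p : Fin i → ι) : Integrable (fun ω => ∏ j, X (p j) ω) μ :=
    integrable_prod_of_memLp_card fun j => by
      simpa only [Fintype.card_fin] using (hident (p j)).memLp_iff.mpr hZ
  simp_rw [Fintype.sum_pow]
  rw [integral_finsetSum _ fun p _ => hint p]
  simp_rw [integral_prod_comp_eq_prod_kerPartition hX hident]
  rw [sum_comp_kerPartition fun π => ∏ B ∈ π.parts, ∫ ω, Z ω ^ #B ∂μ]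
  simp only [nsmul_eq_mul]

lemma integral_sum_finset_pow_eq_sum_finpartition {i : ℕ} (hX : iIndepFun X μ)
    (hident : ∀ l, IdentDistrib (X l) Z μ μ) (hZ : MemLp Z i μ) (s : Finset ι) :
    ∫ ω, (∑ l ∈ s, X l ω) ^ i ∂μ = ∑ π : Finpartition (univ : Finset (Fin i)),
      ((#s).descFactorial #π.parts : ℝ) * ∏ B ∈ π.parts, ∫ ω, Z ω ^ #B ∂μ := by
  simp_rw [← sum_coe_sort s, ← Fintype.card_coe s]
  exact integral_sum_pow_eq_sum_finpartition (hX.precomp Subtype.val_injective)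
    (fun l => hident l) hZ

end Moments

section Freezing

variable {Ω β γ : Type*} [MeasurableSpace Ω] {μ : Measure Ω} [IsFiniteMeasure μ]
  [MeasurableSpace β] [MeasurableSpace γ] {N : Ω → β} {Y : Ω → γ} {F : β → γ → ℝ}

lemma ProbabilityTheory.IndepFun.integrable_comp_of_integrable_integral_norm
    (hNY : IndepFun N Y μ) (hN : Measurable N) (hY : Measurable Y)
    (hF : Measurable (Function.uncurry F)) (hFb : ∀ b, Integrable (fun ω => F b (Y ω)) μ)
    (hnorm : Integrable (fun ω => ∫ ω', ‖F (N ω) (Y ω')‖ ∂μ) μ) :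
    Integrable (fun ω => F (N ω) (Y ω)) μ := by
  have hinner (b : β) : ∫ y, ‖F b y‖ ∂(μ.map Y) = ∫ ω', ‖F b (Y ω')‖ ∂μ :=
    integral_map hY.aemeasurable hF.of_uncurry_left.norm.aestronglyMeasurable
  have hprod : Integrable (Function.uncurry F) ((μ.map N).prod (μ.map Y)) := by
    rw [integrable_prod_iff hF.aestronglyMeasurable]
    refine ⟨ae_of_all _ fun b => (integrable_map_measure hF.of_uncurry_left.aestronglyMeasurable
      hY.aemeasurable).mpr (hFb b), ?_⟩
    rw [integrable_map_measure hF.norm.stronglyMeasurable.integral_prod_right'.aestronglyMeasurable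
      hN.aemeasurable]
    simpa only [Function.comp_def, Function.uncurry_apply_pair, hinner] using hnorm
  rw [← hNY.map_prod_eq_prod_map_map hN.aemeasurable hY.aemeasurable] at hprod
  exact hprod.comp_measurable (hN.prodMk hY)

lemma ProbabilityTheory.IndepFun.integral_comp_eq_integral_integral
    (hNY : IndepFun N Y μ) (hN : Measurable N) (hY : Measurable Y)
    (hF : Measurable (Function.uncurry F)) (hint : Integrable (fun ω => F (N ω) (Y ω)) μ) :
    ∫ ω, F (N ω) (Y ω) ∂μ = ∫ ω, ∫ ω', F (N ω) (Y ω') ∂μ ∂μ := by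
  have hmap := hNY.map_prod_eq_prod_map_map hN.aemeasurable hY.aemeasurable
  have hprod : Integrable (Function.uncurry F) ((μ.map N).prod (μ.map Y)) := by
    rw [← hmap]
    exact (integrable_map_measure hF.aestronglyMeasurable (hN.prodMk hY).aemeasurable).mpr hint
  calc ∫ ω, F (N ω) (Y ω) ∂μ
      = ∫ q, Function.uncurry F q ∂(μ.map fun ω => (N ω, Y ω)) :=
        (integral_map (hN.prodMk hY).aemeasurable hF.aestronglyMeasurable).symm
    _ = ∫ b, ∫ y, F b y ∂(μ.map Y) ∂(μ.map N) := by rw [hmap, integral_prod _ hprod]; rfl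
    _ = ∫ ω, ∫ y, F (N ω) y ∂(μ.map Y) ∂μ :=
        integral_map hN.aemeasurable hF.stronglyMeasurable.integral_prod_right'.aestronglyMeasurable
    _ = ∫ ω, ∫ ω', F (N ω) (Y ω') ∂μ ∂μ := integral_congr_ae (ae_of_all _ fun ω =>
        integral_map hY.aemeasurable hF.of_uncurry_left.aestronglyMeasurable)

end Freezing

lemma measurable_uncurry_sum_range_pow (i : ℕ) :
    Measurable (Function.uncurry fun (n : ℕ) (y : ℕ → ℝ) => (∑ l ∈ range n, y l) ^ i) :=
  measurable_from_prod_countable_right fun n =>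
    (Finset.measurable_sum (range n) fun l _ => measurable_pi_apply l).pow_const i

section RandomSum

variable {Ω : Type*} [MeasurableSpace Ω] {μ : Measure Ω} [IsProbabilityMeasure μ] {i : ℕ}
  {X : ℕ → Ω → ℝ} {N : Ω → ℕ}

lemma integrable_sum_range_pow_of_indepFun (hmeas : ∀ l, Measurable (X l))
    (hident : ∀ l, IdentDistrib (X l) (X 0) μ μ) (hN : Measurable N)
    (hNX : IndepFun N (fun ω l => X l ω) μ) (hintX : Integrable (fun ω => |X 0 ω| ^ i) μ)
    (hintN : Integrable (fun ω => (N ω : ℝ) ^ i) μ) :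
    Integrable (fun ω => (∑ l ∈ range (N ω), X l ω) ^ i) μ := by
  have hX0 : MemLp (X 0) i μ := memLp_of_integrable_abs_pow (hmeas 0).aestronglyMeasurable hintX
  have hsum (n : ℕ) : Integrable (fun ω => (∑ l ∈ range n, X l ω) ^ i) μ :=
    integrable_pow_of_memLp (memLp_finsetSum (range n) fun l _ => (hident l).memLp_iff.mpr hX0)
  refine hNX.integrable_comp_of_integrable_integral_norm hN (measurable_pi_lambda _ hmeas)
    (measurable_uncurry_sum_range_pow i) hsum ?_
  refine (hintN.mul_const (∫ ω, |X 0 ω| ^ i ∂μ)).mono'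
    ((measurable_of_countable fun n => ∫ ω', ‖(∑ l ∈ range n, X l ω') ^ i‖ ∂μ).comp
      hN).aestronglyMeasurable (ae_of_all _ fun ω => ?_)
  rw [Real.norm_of_nonneg (integral_nonneg fun _ => norm_nonneg _)]
  simpa only [norm_pow, Real.norm_eq_abs, card_range] using
    integral_abs_sum_pow_le hident hintX (range (N ω))

end RandomSum

theorem random_sum_moments_via_factorial_moments_general
    {Ω : Type*} [MeasurableSpace Ω] (μ : Measure Ω) [IsProbabilityMeasure μ]
    (i : ℕ)
    (X : ℕ → Ω → ℝ) (hmeas : ∀ l, Measurable (X l))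
    (hindep : iIndepFun X μ)
    (hident : ∀ l, IdentDistrib (X l) (X 0) μ μ)
    (N : Ω → ℕ) (hmeasN : Measurable N)
    (hNindep : IndepFun N (fun ω => fun l => X l ω) μ)
    (hintX : Integrable (fun ω => |X 0 ω| ^ i) μ)
    (hintN : Integrable (fun ω => (N ω : ℝ) ^ i) μ) :
    ∫ ω, (∑ l ∈ Finset.range (N ω), X l ω) ^ i ∂μ
      = ∑ π : Finpartition (univ : Finset (Fin i)),
          (∫ ω, ∏ j ∈ Finset.range π.parts.card, ((N ω : ℝ) - (j : ℝ)) ∂μ) *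
            ∏ B ∈ π.parts, ∫ ω, X 0 ω ^ B.card ∂μ := by
  have hX0 : MemLp (X 0) i μ := memLp_of_integrable_abs_pow (hmeas 0).aestronglyMeasurable hintX
  have hfactorial (π : Finpartition (univ : Finset (Fin i))) :
      Integrable (fun ω => ((N ω).descFactorial #π.parts : ℝ)) μ :=
    integrable_descFactorial hmeasN (π.card_parts_le_card.trans (card_fin i).le) hintN
  rw [hNindep.integral_comp_eq_integral_integral (F := fun n y => (∑ l ∈ range n, y l) ^ i)
    hmeasN (measurable_pi_lambda _ hmeas) (measurable_uncurry_sum_range_pow i)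
    (integrable_sum_range_pow_of_indepFun hmeas hident hmeasN hNindep hintX hintN)]
  simp only [integral_sum_finset_pow_eq_sum_finpartition hindep hident hX0, card_range]
  rw [integral_finsetSum _ fun π _ => (hfactorial π).mul_const _]
  refine sum_congr rfl fun π _ => ?_
  rw [integral_mul_const]
  congr 2 with ω
  rw [← descPochhammer_eval_eq_descFactorial, descPochhammer_eval_eq_prod_range]

/-- Let `(X_l)` be i.i.d. real random variables with `E[|X₁|^i] < ∞`, and let `N`
be an `ℕ`-valued random variable with `E[N^i] < ∞`, independent of the sequence. Then the
randomly stopped sum `S_N = X₁ + ⋯ + X_N` satisfies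
`E[S_N^i] = ∑_{π ∈ Π_i} g_{(|π|)} ∏_{B ∈ π} m_{|B|}`, where `g_{(k)} = E[N(N−1)⋯(N−k+1)]` is
the `k`-th factorial moment of `N` and `m_r = E[X₁^r]`. -/
theorem random_sum_moments_via_factorial_moments
    {Ω : Type*} [MeasurableSpace Ω] (μ : Measure Ω) [IsProbabilityMeasure μ]
    (i : ℕ) (hi : 0 < i)
    (X : ℕ → Ω → ℝ) (hmeas : ∀ l, Measurable (X l))
    (hindep : iIndepFun X μ)
    (hident : ∀ l, IdentDistrib (X l) (X 0) μ μ)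
    (N : Ω → ℕ) (hmeasN : Measurable N)
    (hNindep : IndepFun N (fun ω => fun l => X l ω) μ)
    (hintX : Integrable (fun ω => |X 0 ω| ^ i) μ)
    (hintN : Integrable (fun ω => (N ω : ℝ) ^ i) μ) :
    ∫ ω, (∑ l ∈ Finset.range (N ω), X l ω) ^ i ∂μ
      = ∑ π : Finpartition (univ : Finset (Fin i)),
          (∫ ω, ∏ j ∈ Finset.range π.parts.card, ((N ω : ℝ) - (j : ℝ)) ∂μ) *
            ∏ B ∈ π.parts, ∫ ω, X 0 ω ^ B.card ∂μ :=
  random_sum_moments_via_factorial_moments_general μ i X hmeas hindep hident N hmeasN hNindep hintX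
    hintN
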